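/- For H_μ = (1/(1−λf))·[(px²+py²+pz²)/2 + k1 f + k2/x² + k3/y² + k4/z²], f = x²+y²+4z², k4 ≥ 0, the quartic function K_6bλ = (K_RL1μ)² + (2k4/z²)(x·px)², with K_RL1μ = −px(z·px−x·pz) + 2k1x²z − 2k2z/x² + 2λx²zH_μ, satisfies {K_6bλ, H_μ} = 0. -/
import Mathlib


noncomputable section

/-- Phase space ℝ⁶ with coordinates (x,y,z,px,py,pz). -/
abbrev Pt := Fin 6 → ℝ

/-- Standard basis vector. -/
def e (j : Fin 6) : Pt := Pi.single j 1

/-- Canonical Poisson bracket on ℝ⁶: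
{F,G} = Σᵢ (∂F/∂qᵢ ∂G/∂pᵢ − ∂F/∂pᵢ ∂G/∂qᵢ). -/
def pb (F G : Pt → ℝ) (q : Pt) : ℝ :=
    (fderiv ℝ F q (e 0)) * (fderiv ℝ G q (e 3)) - (fderiv ℝ F q (e 3)) * (fderiv ℝ G q (e 0))
  + (fderiv ℝ F q (e 1)) * (fderiv ℝ G q (e 4)) - (fderiv ℝ F q (e 4)) * (fderiv ℝ G q (e 1))
  + (fderiv ℝ F q (e 2)) * (fderiv ℝ G q (e 5)) - (fderiv ℝ F q (e 5)) * (fderiv ℝ G q (e 2))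

/-- H_μ = (1/(1−λf))·[(px²+py²+pz²)/2 + k1 f + k2/x² + k3/y² + k4/z²], f = x²+y²+4z². -/
def Hmu (lam k1 k2 k3 k4 : ℝ) (q : Pt) : ℝ :=
  (1 / (1 - lam * (q 0 ^ 2 + q 1 ^ 2 + 4 * q 2 ^ 2))) *
    ((q 3 ^ 2 + q 4 ^ 2 + q 5 ^ 2) / 2 + k1 * (q 0 ^ 2 + q 1 ^ 2 + 4 * q 2 ^ 2)
      + k2 / q 0 ^ 2 + k3 / q 1 ^ 2 + k4 / q 2 ^ 2)

/-- K_RL1 = −px·(z px − x pz) + 2k1 x² z − 2k2 z/x². -/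
def KRL1 (k1 k2 : ℝ) (q : Pt) : ℝ :=
  -(q 3 * (q 2 * q 3 - q 0 * q 5)) + 2 * k1 * q 0 ^ 2 * q 2 - 2 * k2 * q 2 / q 0 ^ 2

/-- Deformed Runge–Lenz function K_RL1μ = K_RL1 + 2λ x² z H_μ. -/
def KRL1mu (lam k1 k2 k3 k4 : ℝ) (q : Pt) : ℝ :=
  KRL1 k1 k2 q + 2 * lam * q 0 ^ 2 * q 2 * Hmu lam k1 k2 k3 k4 q

/-- K_6bλ = (K_RL1μ)² + (2k4/z²)(x px)². -/
def K6bl (lam k1 k2 k3 k4 : ℝ) (q : Pt) : ℝ :=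
  (KRL1mu lam k1 k2 k3 k4 q) ^ 2 + (2 * k4 / q 2 ^ 2) * (q 0 * q 3) ^ 2

def HF (lam k1 k2 k3 k4 : ℝ) (q : Pt) : ℝ :=
  (1 - lam * (q 0 ^ 2 + q 1 ^ 2 + 4 * q 2 ^ 2))⁻¹ *
    ((q 3 ^ 2 + q 4 ^ 2 + q 5 ^ 2) * (2:ℝ)⁻¹ + k1 * (q 0 ^ 2 + q 1 ^ 2 + 4 * q 2 ^ 2)
      + k2 * (q 0 ^ 2)⁻¹ + k3 * (q 1 ^ 2)⁻¹ + k4 * (q 2 ^ 2)⁻¹)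
def KF (lam k1 k2 k3 k4 : ℝ) (q : Pt) : ℝ :=
  (-(q 3 * (q 2 * q 3 - q 0 * q 5)) + 2 * k1 * q 0 ^ 2 * q 2 - 2 * k2 * q 2 * (q 0 ^ 2)⁻¹
      + 2 * lam * q 0 ^ 2 * q 2 * HF lam k1 k2 k3 k4 q) ^ 2
    + 2 * k4 * (q 2 ^ 2)⁻¹ * (q 0 * q 3) ^ 2

lemma EH (lam k1 k2 k3 k4 : ℝ) : Hmu lam k1 k2 k3 k4 = HF lam k1 k2 k3 k4 := by
  funext p; simp only [Hmu, HF]; ring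

lemma EK (lam k1 k2 k3 k4 : ℝ) : K6bl lam k1 k2 k3 k4 = KF lam k1 k2 k3 k4 := by
  funext p; simp only [K6bl, KRL1mu, KRL1, Hmu, KF, HF]; ring

set_option maxHeartbeats 4000000 in
theorem stmt13 (lam k1 k2 k3 k4 : ℝ) (hk4 : k4 ≥ 0) :
    ∀ q : Pt, q 0 ≠ 0 → q 1 ≠ 0 → q 2 ≠ 0 →
      1 - lam * (q 0 ^ 2 + q 1 ^ 2 + 4 * q 2 ^ 2) > 0 →
      pb (K6bl lam k1 k2 k3 k4) (Hmu lam k1 k2 k3 k4) q = 0 := by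
  intro q hx hy hz hden
  have hdne : 1 - lam * (q 0 ^ 2 + q 1 ^ 2 + 4 * q 2 ^ 2) ≠ 0 := ne_of_gt hden
  have h0 := hasFDerivAt_apply (𝕜 := ℝ) (0 : Fin 6) q
  have h1 := hasFDerivAt_apply (𝕜 := ℝ) (1 : Fin 6) q
  have h2 := hasFDerivAt_apply (𝕜 := ℝ) (2 : Fin 6) q
  have h3 := hasFDerivAt_apply (𝕜 := ℝ) (3 : Fin 6) q
  have h4 := hasFDerivAt_apply (𝕜 := ℝ) (4 : Fin 6) q
  have h5 := hasFDerivAt_apply (𝕜 := ℝ) (5 : Fin 6) q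
  have hp0 := (hasDerivAt_pow 2 (q 0)).comp_hasFDerivAt q h0
  have hp1 := (hasDerivAt_pow 2 (q 1)).comp_hasFDerivAt q h1
  have hp2 := (hasDerivAt_pow 2 (q 2)).comp_hasFDerivAt q h2
  have hp3 := (hasDerivAt_pow 2 (q 3)).comp_hasFDerivAt q h3
  have hp4 := (hasDerivAt_pow 2 (q 4)).comp_hasFDerivAt q h4
  have hp5 := (hasDerivAt_pow 2 (q 5)).comp_hasFDerivAt q h5
  have hf := (hp0.add hp1).add (hp2.const_mul (4:ℝ))
  have hu := (hasFDerivAt_const (1:ℝ) q).sub (hf.const_mul lam)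
  have hinvu := (hasDerivAt_inv hdne).comp_hasFDerivAt q hu
  have hinvx2 := (hasDerivAt_inv (pow_ne_zero 2 hx)).comp_hasFDerivAt q hp0
  have hinvy2 := (hasDerivAt_inv (pow_ne_zero 2 hy)).comp_hasFDerivAt q hp1
  have hinvz2 := (hasDerivAt_inv (pow_ne_zero 2 hz)).comp_hasFDerivAt q hp2
  have hw := (((((hp3.add hp4).add hp5).mul_const ((2:ℝ)⁻¹)).add
      (hf.const_mul k1)).add (hinvx2.const_mul k2)).add
      (hinvy2.const_mul k3) |>.add (hinvz2.const_mul k4)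
  have hH : HasFDerivAt (HF lam k1 k2 k3 k4) _ q := hinvu.mul hw
  have hA := (h3.mul ((h2.mul h3).sub (h0.mul h5))).neg
  have hB := (hp0.const_mul (2*k1)).mul h2
  have hC := (h2.const_mul (2*k2)).mul hinvx2
  have hD := ((hp0.const_mul (2*lam)).mul h2).mul hH
  have hbase := ((hA.add hB).sub hC).add hD
  have hsq := (hasDerivAt_pow 2 _).comp_hasFDerivAt q hbase
  have hlast := (hinvz2.const_mul (2*k4)).mul ((hasDerivAt_pow 2 _).comp_hasFDerivAt q (h0.mul h3))
  have hK : HasFDerivAt (KF lam k1 k2 k3 k4) _ q := hsq.add hlast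
  rw [EH, EK]
  simp only [pb]
  rw [hK.fderiv, hH.fderiv]
  simp [e, Pi.single_apply, ContinuousLinearMap.add_apply, ContinuousLinearMap.sub_apply,
    ContinuousLinearMap.smul_apply, ContinuousLinearMap.neg_apply, ContinuousLinearMap.proj_apply,
    smul_eq_mul, HF, ← inv_pow]
  have ha : q 0 * (q 0)⁻¹ = 1 := mul_inv_cancel₀ hx
  have hc : q 2 * (q 2)⁻¹ = 1 := mul_inv_cancel₀ hz
  linear_combination (((8 : ℝ) * q 3 * k2 * k4 * (1 - lam * (q 0 ^ 2 + q 1 ^ 2 + 4 * q 2 ^ 2))⁻¹ * (q 0)⁻¹ * (q 2)⁻¹ ^ 2) + ((0 : ℝ) * q 3 * q 5 ^ 2 * k2 * (1 - lam * (q 0 ^ 2 + q 1 ^ 2 + 4 * q 2 ^ 2))⁻¹ * (q 0)⁻¹) + ((-8 : ℝ) * q 2 * q 5 * k2 ^ 2 * (1 - lam * (q 0 ^ 2 + q 1 ^ 2 + 4 * q 2 ^ 2))⁻¹ * (q 0)⁻¹ ^ 4) + ((0 : ℝ) * q 2 * q 5 * k1 * k2 * (1 - lam * (q 0 ^ 2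 + q 1 ^ 2 + 4 * q 2 ^ 2))⁻¹) + ((0 : ℝ) * q 2 * q 5 * lam * k2 * k4 * (1 - lam * (q 0 ^ 2 + q 1 ^ 2 + 4 * q 2 ^ 2))⁻¹ ^ 2 * (q 2)⁻¹ ^ 2) + ((0 : ℝ) * q 2 * q 5 * lam * k2 * k3 * (1 - lam * (q 0 ^ 2 + q 1 ^ 2 + 4 * q 2 ^ 2))⁻¹ ^ 2 * (q 1)⁻¹ ^ 2) + ((0 : ℝ) * q 2 * q 5 * lam * k2 ^ 2 * (1 - lam * (q 0 ^ 2 + q 1 ^ 2 + 4 * q 2 ^ 2))⁻¹ ^ 2 * (q 0)⁻¹ ^ 2) + ((0 : ℝ) * q 2 * q 5 ^ 3 * lam * k2 * (1 - lam * (q 0 ^ 2 + q 1 ^ 2 + 4 * q 2 ^ 2))⁻¹ ^ 2) + ((0 : ℝ) * q 2 * q 4 ^ 2 * q 5 * lam * k2 * (1 - lam * (q 0 ^ 2 + q 1 ^ 2 + 4 * q 2 ^ 2))⁻¹ ^ 2) + ((-4 : ℝ) * q 2 * q 3 ^ 2 * q 5 * k2 * (1 - lam * (q 0 ^ 2 +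 q 1 ^ 2 + 4 * q 2 ^ 2))⁻¹ * (q 0)⁻¹ ^ 2) + ((0 : ℝ) * q 2 * q 3 ^ 2 * q 5 * lam * k2 * (1 - lam * (q 0 ^ 2 + q 1 ^ 2 + 4 * q 2 ^ 2))⁻¹ ^ 2) + ((-8 : ℝ) * q 2 ^ 2 * q 3 * k2 * k4 * (1 - lam * (q 0 ^ 2 + q 1 ^ 2 + 4 * q 2 ^ 2))⁻¹ * (q 0)⁻¹ * (q 2)⁻¹ ^ 4) + ((0 : ℝ) * q 2 ^ 3 * q 5 * lam * k1 * k2 * (1 - lam * (q 0 ^ 2 + q 1 ^ 2 + 4 * q 2 ^ 2))⁻¹ ^ 2) + ((0 : ℝ) * q 1 ^ 2 * q 2 * q 5 * lam * k1 * k2 * (1 - lam * (q 0 ^ 2 + q 1 ^ 2 + 4 * q 2 ^ 2))⁻¹ ^ 2) + ((8 : ℝ) * q 0 * q 3 * k2 * k4 * (1 - lam * (q 0 ^ 2 + q 1 ^ 2 + 4 * q 2 ^ 2))⁻¹ * (q 0)⁻¹ ^ 2 * (q 2)⁻¹ ^ 2) + ((-8 : ℝ) * q 0 * q 3 * lam *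 k2 * k4 * (1 - lam * (q 0 ^ 2 + q 1 ^ 2 + 4 * q 2 ^ 2))⁻¹ ^ 2 * (q 2)⁻¹ ^ 2) + ((4 : ℝ) * q 0 * q 3 * q 5 ^ 2 * k2 * (1 - lam * (q 0 ^ 2 + q 1 ^ 2 + 4 * q 2 ^ 2))⁻¹ * (q 0)⁻¹ ^ 2) + ((-8 : ℝ) * q 0 * q 2 * q 5 * k2 ^ 2 * (1 - lam * (q 0 ^ 2 + q 1 ^ 2 + 4 * q 2 ^ 2))⁻¹ * (q 0)⁻¹ ^ 5) + ((0 : ℝ) * q 0 * q 2 * q 5 * k1 * k2 * (1 - lam * (q 0 ^ 2 + q 1 ^ 2 + 4 * q 2 ^ 2))⁻¹ * (q 0)⁻¹) + ((0 : ℝ) * q 0 * q 2 * q 5 * lam * k2 * k4 * (1 - lam * (q 0 ^ 2 + q 1 ^ 2 + 4 * q 2 ^ 2))⁻¹ ^ 2 * (q 0)⁻¹ * (q 2)⁻¹ ^ 2) + ((0 : ℝ) * q 0 * q 2 * q 5 * lam * k2 * k3 * (1 - lam * (q 0 ^ 2 + q 1 ^ 2 + 4 * q 2 ^ 2))⁻¹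 ^ 2 * (q 0)⁻¹ * (q 1)⁻¹ ^ 2) + ((0 : ℝ) * q 0 * q 2 * q 5 * lam * k2 ^ 2 * (1 - lam * (q 0 ^ 2 + q 1 ^ 2 + 4 * q 2 ^ 2))⁻¹ ^ 2 * (q 0)⁻¹ ^ 3) + ((0 : ℝ) * q 0 * q 2 * q 5 ^ 3 * lam * k2 * (1 - lam * (q 0 ^ 2 + q 1 ^ 2 + 4 * q 2 ^ 2))⁻¹ ^ 2 * (q 0)⁻¹) + ((0 : ℝ) * q 0 * q 2 * q 4 ^ 2 * q 5 * lam * k2 * (1 - lam * (q 0 ^ 2 + q 1 ^ 2 + 4 * q 2 ^ 2))⁻¹ ^ 2 * (q 0)⁻¹) + ((-4 : ℝ) * q 0 * q 2 * q 3 ^ 2 * q 5 * k2 * (1 - lam * (q 0 ^ 2 + q 1 ^ 2 + 4 * q 2 ^ 2))⁻¹ * (q 0)⁻¹ ^ 3) + ((0 : ℝ) * q 0 * q 2 * q 3 ^ 2 * q 5 * lam * k2 * (1 - lam * (q 0 ^ 2 + q 1 ^ 2 + 4 * q 2 ^ 2))⁻¹ ^ 2 * (q 0)⁻¹) + ((8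 : ℝ) * q 0 * q 2 ^ 2 * q 3 * lam * k2 * k4 * (1 - lam * (q 0 ^ 2 + q 1 ^ 2 + 4 * q 2 ^ 2))⁻¹ ^ 2 * (q 2)⁻¹ ^ 4) + ((0 : ℝ) * q 0 * q 2 ^ 3 * q 5 * lam * k1 * k2 * (1 - lam * (q 0 ^ 2 + q 1 ^ 2 + 4 * q 2 ^ 2))⁻¹ ^ 2 * (q 0)⁻¹) + ((0 : ℝ) * q 0 * q 1 ^ 2 * q 2 * q 5 * lam * k1 * k2 * (1 - lam * (q 0 ^ 2 + q 1 ^ 2 + 4 * q 2 ^ 2))⁻¹ ^ 2 * (q 0)⁻¹) + ((8 : ℝ) * q 0 ^ 2 * q 3 * k2 * k4 * (1 - lam * (q 0 ^ 2 + q 1 ^ 2 + 4 * q 2 ^ 2))⁻¹ * (q 0)⁻¹ ^ 3 * (q 2)⁻¹ ^ 2) + ((-8 : ℝ) * q 0 ^ 2 * q 3 * lam * k2 * k4 * (1 - lam * (q 0 ^ 2 + q 1 ^ 2 + 4 * q 2 ^ 2))⁻¹ ^ 2 * (q 0)⁻¹ * (q 2)⁻¹ ^ 2) + ((4 : ℝ)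 * q 0 ^ 2 * q 3 * q 5 ^ 2 * k2 * (1 - lam * (q 0 ^ 2 + q 1 ^ 2 + 4 * q 2 ^ 2))⁻¹ * (q 0)⁻¹ ^ 3) + ((8 : ℝ) * q 0 ^ 2 * q 2 * q 5 * k1 * k2 * (1 - lam * (q 0 ^ 2 + q 1 ^ 2 + 4 * q 2 ^ 2))⁻¹ * (q 0)⁻¹ ^ 2) + ((8 : ℝ) * q 0 ^ 2 * q 2 * q 5 * lam * k2 * k4 * (1 - lam * (q 0 ^ 2 + q 1 ^ 2 + 4 * q 2 ^ 2))⁻¹ ^ 2 * (q 0)⁻¹ ^ 2 * (q 2)⁻¹ ^ 2) + ((8 : ℝ) * q 0 ^ 2 * q 2 * q 5 * lam * k2 * k3 * (1 - lam * (q 0 ^ 2 + q 1 ^ 2 + 4 * q 2 ^ 2))⁻¹ ^ 2 * (q 0)⁻¹ ^ 2 * (q 1)⁻¹ ^ 2) + ((8 : ℝ) * q 0 ^ 2 * q 2 * q 5 * lam * k2 ^ 2 * (1 - lam * (q 0 ^ 2 + q 1 ^ 2 + 4 * q 2 ^ 2))⁻¹ ^ 2 * (q 0)⁻¹ ^ 4)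 + ((0 : ℝ) * q 0 ^ 2 * q 2 * q 5 * lam * k1 * k2 * (1 - lam * (q 0 ^ 2 + q 1 ^ 2 + 4 * q 2 ^ 2))⁻¹ ^ 2) + ((4 : ℝ) * q 0 ^ 2 * q 2 * q 5 ^ 3 * lam * k2 * (1 - lam * (q 0 ^ 2 + q 1 ^ 2 + 4 * q 2 ^ 2))⁻¹ ^ 2 * (q 0)⁻¹ ^ 2) + ((4 : ℝ) * q 0 ^ 2 * q 2 * q 4 ^ 2 * q 5 * lam * k2 * (1 - lam * (q 0 ^ 2 + q 1 ^ 2 + 4 * q 2 ^ 2))⁻¹ ^ 2 * (q 0)⁻¹ ^ 2) + ((4 : ℝ) * q 0 ^ 2 * q 2 * q 3 ^ 2 * q 5 * lam * k2 * (1 - lam * (q 0 ^ 2 + q 1 ^ 2 + 4 * q 2 ^ 2))⁻¹ ^ 2 * (q 0)⁻¹ ^ 2) + ((8 : ℝ) * q 0 ^ 2 * q 2 ^ 2 * q 3 * lam * k2 * k4 * (1 - lam * (q 0 ^ 2 + q 1 ^ 2 + 4 * q 2 ^ 2))⁻¹ ^ 2 * (q 0)⁻¹ * (q 2)⁻¹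 ^ 4) + ((32 : ℝ) * q 0 ^ 2 * q 2 ^ 3 * q 5 * lam * k1 * k2 * (1 - lam * (q 0 ^ 2 + q 1 ^ 2 + 4 * q 2 ^ 2))⁻¹ ^ 2 * (q 0)⁻¹ ^ 2) + ((8 : ℝ) * q 0 ^ 2 * q 1 ^ 2 * q 2 * q 5 * lam * k1 * k2 * (1 - lam * (q 0 ^ 2 + q 1 ^ 2 + 4 * q 2 ^ 2))⁻¹ ^ 2 * (q 0)⁻¹ ^ 2) + ((8 : ℝ) * q 0 ^ 3 * q 2 * q 5 * k1 * k2 * (1 - lam * (q 0 ^ 2 + q 1 ^ 2 + 4 * q 2 ^ 2))⁻¹ * (q 0)⁻¹ ^ 3) + ((8 : ℝ) * q 0 ^ 3 * q 2 * q 5 * lam * k2 * k4 * (1 - lam * (q 0 ^ 2 + q 1 ^ 2 + 4 * q 2 ^ 2))⁻¹ ^ 2 * (q 0)⁻¹ ^ 3 * (q 2)⁻¹ ^ 2) + ((8 : ℝ) * q 0 ^ 3 * q 2 * q 5 * lam * k2 * k3 * (1 - lam * (q 0 ^ 2 + q 1 ^ 2 + 4 * q 2 ^ 2))⁻¹ ^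 2 * (q 0)⁻¹ ^ 3 * (q 1)⁻¹ ^ 2) + ((8 : ℝ) * q 0 ^ 3 * q 2 * q 5 * lam * k2 ^ 2 * (1 - lam * (q 0 ^ 2 + q 1 ^ 2 + 4 * q 2 ^ 2))⁻¹ ^ 2 * (q 0)⁻¹ ^ 5) + ((0 : ℝ) * q 0 ^ 3 * q 2 * q 5 * lam * k1 * k2 * (1 - lam * (q 0 ^ 2 + q 1 ^ 2 + 4 * q 2 ^ 2))⁻¹ ^ 2 * (q 0)⁻¹) + ((4 : ℝ) * q 0 ^ 3 * q 2 * q 5 ^ 3 * lam * k2 * (1 - lam * (q 0 ^ 2 + q 1 ^ 2 + 4 * q 2 ^ 2))⁻¹ ^ 2 * (q 0)⁻¹ ^ 3) + ((4 : ℝ) * q 0 ^ 3 * q 2 * q 4 ^ 2 * q 5 * lam * k2 * (1 - lam * (q 0 ^ 2 + q 1 ^ 2 + 4 * q 2 ^ 2))⁻¹ ^ 2 * (q 0)⁻¹ ^ 3) + ((4 : ℝ) * q 0 ^ 3 * q 2 * q 3 ^ 2 * q 5 * lam * k2 * (1 - lam * (q 0 ^ 2 + q 1 ^ 2 + 4 *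 q 2 ^ 2))⁻¹ ^ 2 * (q 0)⁻¹ ^ 3) + ((32 : ℝ) * q 0 ^ 3 * q 2 ^ 3 * q 5 * lam * k1 * k2 * (1 - lam * (q 0 ^ 2 + q 1 ^ 2 + 4 * q 2 ^ 2))⁻¹ ^ 2 * (q 0)⁻¹ ^ 3) + ((8 : ℝ) * q 0 ^ 3 * q 1 ^ 2 * q 2 * q 5 * lam * k1 * k2 * (1 - lam * (q 0 ^ 2 + q 1 ^ 2 + 4 * q 2 ^ 2))⁻¹ ^ 2 * (q 0)⁻¹ ^ 3) + ((8 : ℝ) * q 0 ^ 4 * q 2 * q 5 * lam * k1 * k2 * (1 - lam * (q 0 ^ 2 + q 1 ^ 2 + 4 * q 2 ^ 2))⁻¹ ^ 2 * (q 0)⁻¹ ^ 2) + ((8 : ℝ) * q 0 ^ 5 * q 2 * q 5 * lam * k1 * k2 * (1 - lam * (q 0 ^ 2 + q 1 ^ 2 + 4 * q 2 ^ 2))⁻¹ ^ 2 * (q 0)⁻¹ ^ 3)) * ha + (((-8 : ℝ) * q 3 * k2 * k4 * (1 - lam * (q 0 ^ 2 + q 1 ^ 2 + 4 * q 2 ^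 2))⁻¹ * (q 0)⁻¹ * (q 2)⁻¹ ^ 2) + ((-8 : ℝ) * q 2 * q 3 * k2 * k4 * (1 - lam * (q 0 ^ 2 + q 1 ^ 2 + 4 * q 2 ^ 2))⁻¹ * (q 0)⁻¹ * (q 2)⁻¹ ^ 3) + ((8 : ℝ) * q 0 * q 3 * lam * k2 * k4 * (1 - lam * (q 0 ^ 2 + q 1 ^ 2 + 4 * q 2 ^ 2))⁻¹ ^ 2 * (q 2)⁻¹ ^ 2) + ((-4 : ℝ) * q 0 * q 3 ^ 3 * k4 * (1 - lam * (q 0 ^ 2 + q 1 ^ 2 + 4 * q 2 ^ 2))⁻¹ * (q 2)⁻¹ ^ 2) + ((8 : ℝ) * q 0 * q 2 * q 3 * lam * k2 * k4 * (1 - lam * (q 0 ^ 2 + q 1 ^ 2 + 4 * q 2 ^ 2))⁻¹ ^ 2 * (q 2)⁻¹ ^ 3) + ((-4 : ℝ) * q 0 * q 2 * q 3 ^ 3 * k4 * (1 - lam * (q 0 ^ 2 + q 1 ^ 2 + 4 * q 2 ^ 2))⁻¹ * (q 2)⁻¹ ^ 3) + ((8 : ℝ) * q 0 ^ 3 * q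 3 * k1 * k4 * (1 - lam * (q 0 ^ 2 + q 1 ^ 2 + 4 * q 2 ^ 2))⁻¹ * (q 2)⁻¹ ^ 2) + ((8 : ℝ) * q 0 ^ 3 * q 3 * lam * k4 ^ 2 * (1 - lam * (q 0 ^ 2 + q 1 ^ 2 + 4 * q 2 ^ 2))⁻¹ ^ 2 * (q 2)⁻¹ ^ 4) + ((8 : ℝ) * q 0 ^ 3 * q 3 * lam * k3 * k4 * (1 - lam * (q 0 ^ 2 + q 1 ^ 2 + 4 * q 2 ^ 2))⁻¹ ^ 2 * (q 1)⁻¹ ^ 2 * (q 2)⁻¹ ^ 2) + ((0 : ℝ) * q 0 ^ 3 * q 3 * lam * k1 * k4 * (1 - lam * (q 0 ^ 2 + q 1 ^ 2 + 4 * q 2 ^ 2))⁻¹ ^ 2) + ((4 : ℝ) * q 0 ^ 3 * q 3 * q 5 ^ 2 * lam * k4 * (1 - lam * (q 0 ^ 2 + q 1 ^ 2 + 4 * q 2 ^ 2))⁻¹ ^ 2 * (q 2)⁻¹ ^ 2) + ((4 : ℝ) * q 0 ^ 3 * q 3 * q 4 ^ 2 * lam * k4 * (1 - lam * (q 0 ^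 2 + q 1 ^ 2 + 4 * q 2 ^ 2))⁻¹ ^ 2 * (q 2)⁻¹ ^ 2) + ((4 : ℝ) * q 0 ^ 3 * q 3 ^ 3 * lam * k4 * (1 - lam * (q 0 ^ 2 + q 1 ^ 2 + 4 * q 2 ^ 2))⁻¹ ^ 2 * (q 2)⁻¹ ^ 2) + ((8 : ℝ) * q 0 ^ 3 * q 2 * q 3 * k1 * k4 * (1 - lam * (q 0 ^ 2 + q 1 ^ 2 + 4 * q 2 ^ 2))⁻¹ * (q 2)⁻¹ ^ 3) + ((8 : ℝ) * q 0 ^ 3 * q 2 * q 3 * lam * k4 ^ 2 * (1 - lam * (q 0 ^ 2 + q 1 ^ 2 + 4 * q 2 ^ 2))⁻¹ ^ 2 * (q 2)⁻¹ ^ 5) + ((8 : ℝ) * q 0 ^ 3 * q 2 * q 3 * lam * k3 * k4 * (1 - lam * (q 0 ^ 2 + q 1 ^ 2 + 4 * q 2 ^ 2))⁻¹ ^ 2 * (q 1)⁻¹ ^ 2 * (q 2)⁻¹ ^ 3) + ((0 : ℝ) * q 0 ^ 3 * q 2 * q 3 * lam * k1 * k4 * (1 - lam * (q 0 ^ 2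 + q 1 ^ 2 + 4 * q 2 ^ 2))⁻¹ ^ 2 * (q 2)⁻¹) + ((4 : ℝ) * q 0 ^ 3 * q 2 * q 3 * q 5 ^ 2 * lam * k4 * (1 - lam * (q 0 ^ 2 + q 1 ^ 2 + 4 * q 2 ^ 2))⁻¹ ^ 2 * (q 2)⁻¹ ^ 3) + ((4 : ℝ) * q 0 ^ 3 * q 2 * q 3 * q 4 ^ 2 * lam * k4 * (1 - lam * (q 0 ^ 2 + q 1 ^ 2 + 4 * q 2 ^ 2))⁻¹ ^ 2 * (q 2)⁻¹ ^ 3) + ((4 : ℝ) * q 0 ^ 3 * q 2 * q 3 ^ 3 * lam * k4 * (1 - lam * (q 0 ^ 2 + q 1 ^ 2 + 4 * q 2 ^ 2))⁻¹ ^ 2 * (q 2)⁻¹ ^ 3) + ((32 : ℝ) * q 0 ^ 3 * q 2 ^ 2 * q 3 * lam * k1 * k4 * (1 - lam * (q 0 ^ 2 + q 1 ^ 2 + 4 * q 2 ^ 2))⁻¹ ^ 2 * (q 2)⁻¹ ^ 2) + ((32 : ℝ) * q 0 ^ 3 * q 2 ^ 3 * q 3 * lam * k1 * k4 * (1 - lam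 * (q 0 ^ 2 + q 1 ^ 2 + 4 * q 2 ^ 2))⁻¹ ^ 2 * (q 2)⁻¹ ^ 3) + ((8 : ℝ) * q 0 ^ 3 * q 1 ^ 2 * q 3 * lam * k1 * k4 * (1 - lam * (q 0 ^ 2 + q 1 ^ 2 + 4 * q 2 ^ 2))⁻¹ ^ 2 * (q 2)⁻¹ ^ 2) + ((8 : ℝ) * q 0 ^ 3 * q 1 ^ 2 * q 2 * q 3 * lam * k1 * k4 * (1 - lam * (q 0 ^ 2 + q 1 ^ 2 + 4 * q 2 ^ 2))⁻¹ ^ 2 * (q 2)⁻¹ ^ 3) + ((8 : ℝ) * q 0 ^ 5 * q 3 * lam * k1 * k4 * (1 - lam * (q 0 ^ 2 + q 1 ^ 2 + 4 * q 2 ^ 2))⁻¹ ^ 2 * (q 2)⁻¹ ^ 2) + ((8 : ℝ) * q 0 ^ 5 * q 2 * q 3 * lam * k1 * k4 * (1 - lam * (q 0 ^ 2 + q 1 ^ 2 + 4 * q 2 ^ 2))⁻¹ ^ 2 * (q 2)⁻¹ ^ 3)) * hc
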